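/- Let α ∈ ℂ⁴ and let N ≥ 1 be an integer. Define F_N : ℝ³ → ℂ by F_N(p) = (2/(|p|²+1))² (α·ω(p))^N. Then for all p ∈ ℝ³, (L̃₃ F_N)(p) = −i·N·(α₁p₂ − α₂p₁)·(2/(|p|²+1))³·(α·ω(p))^{N−1}, where (L̃₃ g)(p) = −i(p₂ ∂g/∂p₁(p) − p₁ ∂g/∂p₂(p)). -/

import Mathlib

/-- `|p|²` on `Fin 3 → ℝ`. -/
noncomputable def normSq3 (p : Fin 3 → ℝ) : ℝ := p 0 ^ 2 + p 1 ^ 2 + p 2 ^ 2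

/-- The inverse stereographic projection `ω : ℝ³ → ℝ⁴`. -/
noncomputable def stereoInv (p : Fin 3 → ℝ) : Fin 4 → ℝ :=
  ![2 * p 0 / (normSq3 p + 1), 2 * p 1 / (normSq3 p + 1), 2 * p 2 / (normSq3 p + 1),
    (normSq3 p - 1) / (normSq3 p + 1)]

/-- `α·ω(p) = Σⱼ αⱼ ωⱼ(p)` (bilinear, no conjugation). -/
noncomputable def adotom (α : Fin 4 → ℂ) (p : Fin 3 → ℝ) : ℂ :=
  ∑ j, α j * (stereoInv p j : ℂ)

/-- The angular momentum operator in momentum space: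
`(L̃₃ g)(p) = −i(p₂ ∂g/∂p₁(p) − p₁ ∂g/∂p₂(p))`. -/
noncomputable def L3tilde (g : (Fin 3 → ℝ) → ℂ) (p : Fin 3 → ℝ) : ℂ :=
  -Complex.I * ((p 1 : ℂ) * fderiv ℝ g p (Pi.single 0 1)
    - (p 0 : ℂ) * fderiv ℝ g p (Pi.single 1 1))

/-!
`L̃₃ g (p) = -i · Dg(p)(v)` for the rotation field `v = (p₂, -p₁, 0)`, so `L̃₃` is a derivation
that annihilates every radial function `h(|p|²)`. Since `ω₁, ω₂, ω₃` are the coordinates times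
the radial conformal factor `s = 2/(|p|²+1)` and `ω₄` is radial,
`L̃₃(α·ω) = s · L̃₃(α₁p₁ + α₂p₂ + α₃p₃) = -i s (α₁p₂ - α₂p₁)`, and the Leibniz rule applied to
`s² (α·ω)^N` gives the claim.
-/

open Complex ContinuousLinearMap

def rotField (p : Fin 3 → ℝ) : Fin 3 → ℝ := ![p 1, -p 0, 0]

theorem L3tilde_eq_fderiv_rotField (g : (Fin 3 → ℝ) → ℂ) (p : Fin 3 → ℝ) :
    L3tilde g p = -I * fderiv ℝ g p (rotField p) := by
  have hv : rotField p = p 1 • Pi.single 0 1 + (-p 0) • Pi.single 1 1 := by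
    ext i; fin_cases i <;> simp [rotField]
  rw [L3tilde, hv, map_add, map_smul, map_smul, Complex.real_smul, Complex.real_smul]
  push_cast
  ring

section Derivation

variable {f g : (Fin 3 → ℝ) → ℂ} {p : Fin 3 → ℝ}

theorem L3tilde_add (hf : DifferentiableAt ℝ f p) (hg : DifferentiableAt ℝ g p) :
    L3tilde (fun q => f q + g q) p = L3tilde f p + L3tilde g p := by
  simp only [L3tilde_eq_fderiv_rotField, fderiv_fun_add hf hg, add_apply]
  ring

theorem L3tilde_mul (hf : DifferentiableAt ℝ f p) (hg : DifferentiableAt ℝ g p) :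
    L3tilde (fun q => f q * g q) p = f p * L3tilde g p + g p * L3tilde f p := by
  simp only [L3tilde_eq_fderiv_rotField, fderiv_fun_mul hf hg, add_apply, smul_apply, smul_eq_mul]
  ring

theorem L3tilde_pow (hf : DifferentiableAt ℝ f p) (n : ℕ) :
    L3tilde (fun q => f q ^ n) p = n * f p ^ (n - 1) * L3tilde f p := by
  simp only [L3tilde_eq_fderiv_rotField, fderiv_fun_pow n hf, smul_apply, smul_eq_mul,
    nsmul_eq_mul]
  ring

end Derivation

theorem hasFDerivAt_normSq3 (p : Fin 3 → ℝ) :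
    HasFDerivAt normSq3 (∑ i, (2 * p i) • proj (R := ℝ) (φ := fun _ : Fin 3 => ℝ) i) p := by
  have h (i : Fin 3) := (hasDerivAt_pow 2 (p i)).comp_hasFDerivAt p
    (proj (R := ℝ) (φ := fun _ : Fin 3 => ℝ) i).hasFDerivAt
  refine ((((h 0).add (h 1)).add (h 2)).congr_fderiv ?_).congr_of_eventuallyEq
    (.of_forall fun q => ?_)
  · ext v; simp [Fin.sum_univ_three]
  · simp [normSq3]

theorem L3tilde_comp_normSq3 {h : ℝ → ℂ} {p : Fin 3 → ℝ}
    (hh : DifferentiableAt ℝ h (normSq3 p)) : L3tilde (fun q => h (normSq3 q)) p = 0 := by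
  have hd : HasFDerivAt (fun q => h (normSq3 q)) _ p :=
    hh.hasFDerivAt.comp p (hasFDerivAt_normSq3 p)
  rw [L3tilde_eq_fderiv_rotField, hd.fderiv]
  simp [rotField, Fin.sum_univ_three]
  ring

theorem L3tilde_linear (c : Fin 3 → ℂ) (p : Fin 3 → ℝ) :
    L3tilde (fun q => ∑ i, c i * (q i : ℂ)) p = -I * (c 0 * p 1 - c 1 * p 0) := by
  have h : HasFDerivAt (fun q : Fin 3 → ℝ => ∑ i, c i * (q i : ℂ))
      (∑ i, c i • ofRealCLM.comp (proj i)) p :=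
    HasFDerivAt.fun_sum fun i _ =>
      (ofRealCLM.hasFDerivAt.comp p (hasFDerivAt_apply i p)).const_mul (c i)
  rw [L3tilde_eq_fderiv_rotField, h.fderiv]
  simp [rotField, Fin.sum_univ_three]
  ring

theorem normSq3_add_one_pos (p : Fin 3 → ℝ) : 0 < normSq3 p + 1 := by
  unfold normSq3; positivity

theorem differentiableAt_conformalFactor (p : Fin 3 → ℝ) :
    DifferentiableAt ℝ (fun q => ((2 / (normSq3 q + 1) : ℝ) : ℂ)) p := by
  have := (normSq3_add_one_pos p).ne'
  unfold normSq3 at *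
  fun_prop (disch := assumption)

theorem adotom_eq (α : Fin 4 → ℂ) (q : Fin 3 → ℝ) :
    adotom α q = ((2 / (normSq3 q + 1) : ℝ) : ℂ) * ∑ i : Fin 3, α i.castSucc * (q i : ℂ)
      + α 3 * (((normSq3 q - 1) / (normSq3 q + 1) : ℝ) : ℂ) := by
  simp [adotom, stereoInv, Fin.sum_univ_four, Fin.sum_univ_three]
  ring

theorem differentiableAt_adotom (α : Fin 4 → ℂ) (p : Fin 3 → ℝ) :
    DifferentiableAt ℝ (adotom α) p := by
  have := (normSq3_add_one_pos p).ne'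
  rw [funext (adotom_eq α)]
  unfold normSq3 at *
  fun_prop (disch := assumption)

theorem L3tilde_conformalFactor (p : Fin 3 → ℝ) :
    L3tilde (fun q => ((2 / (normSq3 q + 1) : ℝ) : ℂ)) p = 0 := by
  have := (normSq3_add_one_pos p).ne'
  exact L3tilde_comp_normSq3 (h := fun x : ℝ => ((2 / (x + 1) : ℝ) : ℂ))
    (by fun_prop (disch := assumption))

theorem L3tilde_adotom (α : Fin 4 → ℂ) (p : Fin 3 → ℝ) :
    L3tilde (adotom α) p =
      -I * ((2 / (normSq3 p + 1) : ℝ) : ℂ) * (α 0 * p 1 - α 1 * p 0) := by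
  have hp := (normSq3_add_one_pos p).ne'
  have hs := differentiableAt_conformalFactor p
  have hlin : DifferentiableAt ℝ (fun q : Fin 3 → ℝ => ∑ i : Fin 3, α i.castSucc * (q i : ℂ)) p :=
    by fun_prop
  have hrad : DifferentiableAt ℝ (fun x : ℝ => α 3 * (((x - 1) / (x + 1) : ℝ) : ℂ)) (normSq3 p) :=
    by fun_prop (disch := assumption)
  rw [funext (adotom_eq α), L3tilde_add (hs.fun_mul hlin)
      (.fun_comp' p hrad (hasFDerivAt_normSq3 p).differentiableAt),
    L3tilde_mul hs hlin, L3tilde_comp_normSq3 hrad, L3tilde_conformalFactor, L3tilde_linear]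
  simp
  ring

theorem stmt10_general (α : Fin 4 → ℂ) (N : ℕ) (p : Fin 3 → ℝ) :
    L3tilde (fun q => ((2 / (normSq3 q + 1) : ℝ) : ℂ) ^ 2 * adotom α q ^ N) p =
      -Complex.I * (N : ℂ) * (α 0 * (p 1 : ℂ) - α 1 * (p 0 : ℂ)) *
        ((2 / (normSq3 p + 1) : ℝ) : ℂ) ^ 3 * adotom α p ^ (N - 1) := by
  have hs := differentiableAt_conformalFactor p
  have hA := differentiableAt_adotom α p
  rw [L3tilde_mul (hs.fun_pow 2) (hA.fun_pow N), L3tilde_pow hA, L3tilde_pow hs,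
    L3tilde_adotom, L3tilde_conformalFactor]
  ring

/-- for `F_N(p) = (2/(|p|²+1))² (α·ω(p))^N`,
`(L̃₃F_N)(p) = −iN(α₁p₂−α₂p₁)(2/(|p|²+1))³(α·ω(p))^{N−1}`. -/
theorem stmt10 (α : Fin 4 → ℂ) (N : ℕ) (hN : 1 ≤ N) (p : Fin 3 → ℝ) :
    L3tilde (fun q => ((2 / (normSq3 q + 1) : ℝ) : ℂ) ^ 2 * adotom α q ^ N) p =
      -Complex.I * (N : ℂ) * (α 0 * (p 1 : ℂ) - α 1 * (p 0 : ℂ)) *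
        ((2 / (normSq3 p + 1) : ℝ) : ℂ) ^ 3 * adotom α p ^ (N - 1) :=
  stmt10_general α N p
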